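/- arXiv:0712.3205 — 2 statements merged into one kernel-verified Lean document; each statement's English description precedes it below -/
import Mathlib

section
/- Let x ∈ ℝ^g satisfy 2x ∈ Λ but x ∉ Λ (i.e., x represents a nonzero two-torsion point of ℝ^g/Λ). Then the maximum defining Θ(x) is attained by at least two distinct lattice elements: there exist μ₁ ≠ μ₂ in Λ with Θ(x) = Q(μ₁,x) − (1/2)Q(μ₁,μ₁) = Q(μ₂,x) − (1/2)Q(μ₂,μ₂). -/
/-!
The map `l ↦ 2x - l` preserves `Λ` because `2x ∈ Λ`, and it preserves the function
`l ↦ Q l x - Q l l / 2` being maximised, which is `-(1/2) Q(l - x, l - x)` up to a constant.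
Positive definiteness makes this function coercive, so only finitely many lattice points compete
and the supremum is attained at some `μ`; then `2x - μ` is a second maximiser, different from `μ`
since otherwise `x = μ ∈ Λ`.
-/

open Metric Set Submodule

noncomputable section

def thetaTerm {E : Type*} [AddCommGroup E] [Module ℝ E] (Q : E →ₗ[ℝ] E →ₗ[ℝ] ℝ) (x l : E) : ℝ :=
  Q l x - Q l l / 2

section Module

variable {E : Type*} [AddCommGroup E] [Module ℝ E] (Q : E →ₗ[ℝ] E →ₗ[ℝ] ℝ)

@[simp]
theorem thetaTerm_zero_right (x : E) : thetaTerm Q x 0 = 0 := by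
  simp [thetaTerm]

theorem thetaTerm_two_smul_sub (hQsymm : ∀ u v, Q u v = Q v u) (x l : E) :
    thetaTerm Q x ((2 : ℝ) • x - l) = thetaTerm Q x l := by
  simp only [thetaTerm, map_sub, map_smul, LinearMap.sub_apply, LinearMap.smul_apply, smul_eq_mul]
  linear_combination hQsymm x l

end Module

section FiniteDimensional

variable {E : Type*} [NormedAddCommGroup E] [NormedSpace ℝ E] [FiniteDimensional ℝ E]
  (Q : E →ₗ[ℝ] E →ₗ[ℝ] ℝ)

theorem LinearMap.continuous_apply_self : Continuous fun v ↦ Q v v :=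
  ((LinearMap.toContinuousLinearMap.toLinearMap.comp Q).continuous_of_finiteDimensional).clm_apply
    continuous_id

variable {Q}

theorem exists_pos_mul_sq_norm_le (hQpos : ∀ v, v ≠ 0 → 0 < Q v v) :
    ∃ c > 0, ∀ v, c * ‖v‖ ^ 2 ≤ Q v v := by
  cases subsingleton_or_nontrivial E with
  | inl _ => exact ⟨1, one_pos, fun v ↦ by simp [Subsingleton.elim v 0]⟩
  | inr _ =>
    obtain ⟨u, hu, hmin⟩ := (isCompact_sphere (0 : E) 1).exists_isMinOn
      (NormedSpace.sphere_nonempty.2 zero_le_one) (Q.continuous_apply_self).continuousOn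
    refine ⟨Q u u, hQpos u (ne_zero_of_mem_unit_sphere ⟨u, hu⟩), fun v ↦ ?_⟩
    rcases eq_or_ne v 0 with rfl | hv
    · simp
    have hnorm : 0 < ‖v‖ := norm_pos_iff.2 hv
    have hunit : ‖v‖⁻¹ • v ∈ sphere (0 : E) 1 := by
      simp [norm_smul, hnorm.ne']
    have hscale : Q (‖v‖⁻¹ • v) (‖v‖⁻¹ • v) * ‖v‖ ^ 2 = Q v v := by
      simp only [map_smul, LinearMap.smul_apply, smul_eq_mul]
      field_simp
    calc Q u u * ‖v‖ ^ 2 ≤ Q (‖v‖⁻¹ • v) (‖v‖⁻¹ • v) * ‖v‖ ^ 2 := by gcongr; exact hmin hunit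
      _ = Q v v := hscale

theorem isBounded_setOf_thetaTerm_nonneg (hQpos : ∀ v, v ≠ 0 → 0 < Q v v) (x : E) :
    Bornology.IsBounded {l | 0 ≤ thetaTerm Q x l} := by
  obtain ⟨c, hc, hcoer⟩ := exists_pos_mul_sq_norm_le hQpos
  set L : E →L[ℝ] ℝ := LinearMap.toContinuousLinearMap (Q.flip x)
  have hL : ∀ l, Q l x ≤ ‖L‖ * ‖l‖ := fun l ↦ (le_abs_self (L l)).trans (L.le_opNorm l)
  refine (isBounded_iff_subset_closedBall 0).2 ⟨2 * ‖L‖ / c, fun l hl ↦ ?_⟩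
  rw [mem_closedBall_zero_iff, le_div_iff₀ hc]
  have hquad : c * ‖l‖ ^ 2 ≤ 2 * ‖L‖ * ‖l‖ := by
    have hl : 0 ≤ Q l x - Q l l / 2 := hl
    linarith [hcoer l, hL l]
  nlinarith [norm_nonneg l, norm_nonneg L]

theorem exists_isMaxOn_thetaTerm (hQpos : ∀ v, v ≠ 0 → 0 < Q v v) {ι : Type*} [Finite ι]
    (b : Module.Basis ι ℝ E) (x : E) :
    ∃ μ ∈ span ℤ (range b), IsMaxOn (thetaTerm Q x) (span ℤ (range b)) μ := by
  have hfin := ZSpan.setFinite_inter b (isBounded_setOf_thetaTerm_nonneg hQpos x)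
  obtain ⟨μ, ⟨-, hμ⟩, hmax⟩ := Set.exists_max_image _ (thetaTerm Q x) hfin
    ⟨0, by simp, zero_mem _⟩
  refine ⟨μ, hμ, fun l hl ↦ ?_⟩
  rcases le_or_gt 0 (thetaTerm Q x l) with hnonneg | hneg
  · exact hmax l ⟨hnonneg, hl⟩
  · have hμ_nonneg : 0 ≤ thetaTerm Q x μ := by simpa using hmax 0 ⟨by simp, zero_mem _⟩
    exact (hneg.trans_le hμ_nonneg).le

end FiniteDimensional

theorem tropical_theta_two_torsion_two_maximizers_general (g : ℕ)
    (Q : (Fin g → ℝ) →ₗ[ℝ] (Fin g → ℝ) →ₗ[ℝ] ℝ)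
    (hQsymm : ∀ x y, Q x y = Q y x)
    (hQpos : ∀ x : Fin g → ℝ, x ≠ 0 → 0 < Q x x)
    (b : Module.Basis (Fin g) ℝ (Fin g → ℝ))
    (Λ : Set (Fin g → ℝ))
    (hΛ : Λ = ((Submodule.span ℤ (Set.range ⇑b) : Submodule ℤ (Fin g → ℝ)) : Set (Fin g → ℝ)))
    (Θ : (Fin g → ℝ) → ℝ)
    (hΘ : ∀ x, Θ x = sSup ((fun l => Q l x - Q l l / 2) '' Λ))
    (x : Fin g → ℝ) (hx : (2 : ℝ) • x ∈ Λ) (hx' : x ∉ Λ) :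
    ∃ μ₁ μ₂ : Fin g → ℝ, μ₁ ∈ Λ ∧ μ₂ ∈ Λ ∧ μ₁ ≠ μ₂ ∧
      Θ x = Q μ₁ x - Q μ₁ μ₁ / 2 ∧ Θ x = Q μ₂ x - Q μ₂ μ₂ / 2 := by
  subst hΛ
  obtain ⟨μ, hμ, hmax⟩ := exists_isMaxOn_thetaTerm hQpos b x
  have hΘμ : Θ x = thetaTerm Q x μ :=
    (hΘ x).trans (IsGreatest.csSup_eq ⟨mem_image_of_mem _ hμ, forall_mem_image.2 hmax⟩)
  refine ⟨μ, (2 : ℝ) • x - μ, hμ, sub_mem hx hμ, fun h ↦ hx' ?_, hΘμ,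
    hΘμ.trans (thetaTerm_two_smul_sub Q hQsymm x μ).symm⟩
  have hxμ : (2 : ℝ) • x = (2 : ℝ) • μ := by rw [two_smul ℝ μ, eq_sub_iff_add_eq.1 h]
  rwa [smul_right_injective _ two_ne_zero hxμ]

/-- Context: `g ≥ 1`, `Q` a symmetric positive definite bilinear form on `ℝ^g`,
`Λ` the full-rank lattice spanned over `ℤ` by an `ℝ`-basis `b` of `ℝ^g`,
and `Θ` the tropical theta function `Θ x = sup_{λ ∈ Λ} (Q λ x - Q λ λ / 2)`. -/
theorem tropical_theta_two_torsion_two_maximizers (g : ℕ) (hg : 1 ≤ g)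
    (Q : (Fin g → ℝ) →ₗ[ℝ] (Fin g → ℝ) →ₗ[ℝ] ℝ)
    (hQsymm : ∀ x y, Q x y = Q y x)
    (hQpos : ∀ x : Fin g → ℝ, x ≠ 0 → 0 < Q x x)
    (b : Module.Basis (Fin g) ℝ (Fin g → ℝ))
    (Λ : Set (Fin g → ℝ))
    (hΛ : Λ = ((Submodule.span ℤ (Set.range ⇑b) : Submodule ℤ (Fin g → ℝ)) : Set (Fin g → ℝ)))
    (Θ : (Fin g → ℝ) → ℝ)
    (hΘ : ∀ x, Θ x = sSup ((fun l => Q l x - Q l l / 2) '' Λ))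
    (x : Fin g → ℝ) (hx : (2 : ℝ) • x ∈ Λ) (hx' : x ∉ Λ) :
    ∃ μ₁ μ₂ : Fin g → ℝ, μ₁ ∈ Λ ∧ μ₂ ∈ Λ ∧ μ₁ ≠ μ₂ ∧
      Θ x = Q μ₁ x - Q μ₁ μ₁ / 2 ∧ Θ x = Q μ₂ x - Q μ₂ μ₂ / 2 :=
  tropical_theta_two_torsion_two_maximizers_general g Q hQsymm hQpos b Λ hΛ Θ hΘ x hx hx'
end
end

section
/- Let x ∈ ℝ^g satisfy 2x ∈ Λ but x ∉ Λ. Then Θ is not differentiable at x; that is, every nonzero two-torsion point of the torus ℝ^g/Λ lies in the corner locus of Θ (the theta divisor). -/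
/-!
Completing the square, `Q l y - Q l l / 2 = Q y y / 2 - Q (l - y) (l - y) / 2`, so the supremum
defining `Θ x` is attained exactly at the lattice points closest to `x` in the `Q`-metric, and each
such `l` gives an affine minorant of `Θ` touching it at `x` with gradient `Q l`; differentiability
at `x` therefore forces the closest point to be unique. When `2 • x ∈ Λ`, the reflection
`l ↦ 2 • x - l` permutes the closest points, and it has no fixed point in `Λ` because `x ∉ Λ`.
-/

open Filter Topology

theorem HasFDerivAt.eq_of_eventually_le_of_eq {E : Type*} [NormedAddCommGroup E] [NormedSpace ℝ E]
    {f φ : E → ℝ} {f' φ' : E →L[ℝ] ℝ} {x : E} (hf : HasFDerivAt f f' x)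
    (hφ : HasFDerivAt φ φ' x) (hle : ∀ᶠ y in 𝓝 x, φ y ≤ f y) (heq : φ x = f x) : f' = φ' := by
  have hmin : IsLocalMin (fun y => f y - φ y) x := by
    filter_upwards [hle] with y hy
    linarith
  exact sub_eq_zero.1 (hmin.hasFDerivAt_eq_zero (hf.sub hφ))

namespace LinearMap

variable {E : Type*} [NormedAddCommGroup E] [NormedSpace ℝ E] [FiniteDimensional ℝ E]
  (Q : E →ₗ[ℝ] E →ₗ[ℝ] ℝ)

theorem continuous_apply_self_s11 : Continuous fun v => Q v v :=
  ((LinearMap.toContinuousLinearMap.toLinearMap ∘ₗ Q).continuous_of_finiteDimensional).clm_apply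
    continuous_id

theorem exists_pos_mul_norm_sq_le (hQ : ∀ v, v ≠ 0 → 0 < Q v v) :
    ∃ c > 0, ∀ v, c * ‖v‖ ^ 2 ≤ Q v v := by
  rcases subsingleton_or_nontrivial E with hE | hE
  · exact ⟨1, one_pos, fun v => by simp [Subsingleton.elim v 0]⟩
  obtain ⟨u, hu, hmin⟩ := (isCompact_sphere (0 : E) 1).exists_isMinOn
    (NormedSpace.sphere_nonempty.2 zero_le_one) (Q.continuous_apply_self_s11).continuousOn
  have hu0 : u ≠ 0 := ne_zero_of_mem_unit_sphere ⟨u, hu⟩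
  refine ⟨Q u u, hQ u hu0, fun v => ?_⟩
  rcases eq_or_ne v 0 with rfl | hv
  · simp
  have hnorm : 0 < ‖v‖ := norm_pos_iff.2 hv
  have hunit : ‖v‖⁻¹ • v ∈ Metric.sphere (0 : E) 1 := by
    simp [norm_smul, hnorm.ne']
  have hle : Q u u ≤ ‖v‖⁻¹ * (‖v‖⁻¹ * Q v v) := by simpa using hmin hunit
  calc Q u u * ‖v‖ ^ 2 ≤ ‖v‖⁻¹ * (‖v‖⁻¹ * Q v v) * ‖v‖ ^ 2 := by gcongr
    _ = Q v v := by field_simp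

theorem tendsto_apply_self_cocompact (hQ : ∀ v, v ≠ 0 → 0 < Q v v) :
    Tendsto (fun v => Q v v) (cocompact E) atTop := by
  obtain ⟨c, hc, hle⟩ := Q.exists_pos_mul_norm_sq_le hQ
  exact tendsto_atTop_mono hle <| ((tendsto_pow_atTop two_ne_zero).comp
    tendsto_norm_cocompact_atTop).const_mul_atTop hc

theorem exists_isMinOn_apply_sub_self (hQ : ∀ v, v ≠ 0 → 0 < Q v v) {S : Set E}
    (hS : IsClosed S) (hne : S.Nonempty) (x : E) :
    ∃ l ∈ S, IsMinOn (fun l => Q (l - x) (l - x)) S l := by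
  obtain ⟨l₀, hl₀⟩ := hne
  have htendsto : Tendsto (fun l => Q (l - x) (l - x)) (cocompact E) atTop :=
    (Q.tendsto_apply_self_cocompact hQ).comp
      (Homeomorph.subRight x).isClosedEmbedding.tendsto_cocompact
  refine ((Q.continuous_apply_self_s11).comp (continuous_sub_right x)).continuousOn.exists_isMinOn'
    hS hl₀ ?_
  exact (htendsto.eventually_ge_atTop _).filter_mono inf_le_left

end LinearMap

section TropicalTheta

variable {E : Type*} [AddCommGroup E] [Module ℝ E] (Q : E →ₗ[ℝ] E →ₗ[ℝ] ℝ)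

/-- For `S = Λ` a lattice this is the tropical theta function of `(Q, Λ)`. -/
noncomputable def tropicalTheta (S : Set E) (y : E) : ℝ :=
  sSup ((fun l => Q l y - Q l l / 2) '' S)

variable {Q}

theorem apply_sub_half_apply_self_eq (hsymm : ∀ u v, Q u v = Q v u) (l y : E) :
    Q l y - Q l l / 2 = Q y y / 2 - Q (l - y) (l - y) / 2 := by
  simp only [map_sub, LinearMap.sub_apply, hsymm y l]
  ring

theorem le_tropicalTheta (hsymm : ∀ u v, Q u v = Q v u) (hnonneg : ∀ v, 0 ≤ Q v v)
    {S : Set E} {l : E} (hl : l ∈ S) (y : E) : Q l y - Q l l / 2 ≤ tropicalTheta Q S y := by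
  refine le_csSup ⟨Q y y / 2, ?_⟩ ⟨l, hl, rfl⟩
  rintro _ ⟨m, -, rfl⟩
  linarith [apply_sub_half_apply_self_eq hsymm m y, hnonneg (m - y)]

theorem tropicalTheta_eq_of_isMinOn (hsymm : ∀ u v, Q u v = Q v u) {S : Set E} {l x : E}
    (hl : l ∈ S) (hmin : IsMinOn (fun l => Q (l - x) (l - x)) S l) :
    tropicalTheta Q S x = Q l x - Q l l / 2 := by
  refine IsGreatest.csSup_eq ⟨⟨l, hl, rfl⟩, ?_⟩
  rintro _ ⟨m, hm, rfl⟩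
  have : Q (l - x) (l - x) ≤ Q (m - x) (m - x) := hmin hm
  linarith [apply_sub_half_apply_self_eq hsymm m x, apply_sub_half_apply_self_eq hsymm l x]

end TropicalTheta

section Differentiability

variable {E : Type*} [NormedAddCommGroup E] [NormedSpace ℝ E] [FiniteDimensional ℝ E]
  {Q : E →ₗ[ℝ] E →ₗ[ℝ] ℝ}

theorem fderiv_tropicalTheta_eq_of_isMinOn (hsymm : ∀ u v, Q u v = Q v u)
    (hnonneg : ∀ v, 0 ≤ Q v v) {S : Set E} {l x : E} (hl : l ∈ S)
    (hmin : IsMinOn (fun l => Q (l - x) (l - x)) S l)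
    (hdiff : DifferentiableAt ℝ (tropicalTheta Q S) x) :
    fderiv ℝ (tropicalTheta Q S) x = (Q l).toContinuousLinearMap := by
  refine hdiff.hasFDerivAt.eq_of_eventually_le_of_eq
    (((Q l).toContinuousLinearMap.hasFDerivAt).sub_const (Q l l / 2))
    (.of_forall fun y => le_tropicalTheta hsymm hnonneg hl y) ?_
  exact (tropicalTheta_eq_of_isMinOn hsymm hl hmin).symm

theorem eq_of_isMinOn_of_differentiableAt_tropicalTheta (hsymm : ∀ u v, Q u v = Q v u)
    (hpos : ∀ v, v ≠ 0 → 0 < Q v v) {S : Set E} {l m x : E} (hl : l ∈ S) (hm : m ∈ S)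
    (hlmin : IsMinOn (fun l => Q (l - x) (l - x)) S l)
    (hmmin : IsMinOn (fun l => Q (l - x) (l - x)) S m)
    (hdiff : DifferentiableAt ℝ (tropicalTheta Q S) x) : l = m := by
  have hnonneg : ∀ v, 0 ≤ Q v v := fun v => by
    rcases eq_or_ne v 0 with rfl | hv
    · simp
    · exact (hpos v hv).le
  have hQlm : Q l = Q m := by
    have := (fderiv_tropicalTheta_eq_of_isMinOn hsymm hnonneg hl hlmin hdiff).symm.trans
      (fderiv_tropicalTheta_eq_of_isMinOn hsymm hnonneg hm hmmin hdiff)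
    exact LinearMap.toContinuousLinearMap.injective this
  by_contra hne
  have hzero : Q (l - m) (l - m) = 0 := by
    simp only [map_sub, LinearMap.sub_apply, hQlm]
    ring
  exact (hpos _ (sub_ne_zero.2 hne)).ne' hzero

end Differentiability

theorem tropical_theta_two_torsion_in_corner_locus_general (g : ℕ)
    (Q : (Fin g → ℝ) →ₗ[ℝ] (Fin g → ℝ) →ₗ[ℝ] ℝ)
    (hQsymm : ∀ x y, Q x y = Q y x)
    (hQpos : ∀ x : Fin g → ℝ, x ≠ 0 → 0 < Q x x)
    (b : Module.Basis (Fin g) ℝ (Fin g → ℝ))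
    (Λ : Set (Fin g → ℝ))
    (hΛ : Λ = ((Submodule.span ℤ (Set.range ⇑b) : Submodule ℤ (Fin g → ℝ)) : Set (Fin g → ℝ)))
    (Θ : (Fin g → ℝ) → ℝ)
    (hΘ : ∀ x, Θ x = sSup ((fun l => Q l x - Q l l / 2) '' Λ))
    (x : Fin g → ℝ) (hx : (2 : ℝ) • x ∈ Λ) (hx' : x ∉ Λ) :
    ¬ DifferentiableAt ℝ Θ x := by
  obtain rfl : Θ = tropicalTheta Q Λ := funext hΘ
  have hclosed : IsClosed Λ := hΛ ▸ AddSubgroup.isClosed_of_discrete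
    (H := (Submodule.span ℤ (Set.range b)).toAddSubgroup)
  have hmirror : ∀ l ∈ Λ, (2 : ℝ) • x - l ∈ Λ := fun l hl => by
    subst hΛ
    exact sub_mem hx hl
  have hzero : (0 : Fin g → ℝ) ∈ Λ := hΛ ▸ zero_mem _
  obtain ⟨l, hl, hmin⟩ := Q.exists_isMinOn_apply_sub_self hQpos hclosed ⟨0, hzero⟩ x
  have hmin_reflect : IsMinOn (fun l => Q (l - x) (l - x)) Λ ((2 : ℝ) • x - l) := fun m hm => by
    have hreflect : (2 : ℝ) • x - l - x = -(l - x) := by module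
    simpa only [hreflect, map_neg, LinearMap.neg_apply, neg_neg] using hmin hm
  intro hdiff
  have hl' := eq_of_isMinOn_of_differentiableAt_tropicalTheta hQsymm hQpos hl (hmirror l hl)
    hmin hmin_reflect hdiff
  exact hx' (by rwa [show x = l by linear_combination (norm := module) (-1 / 2 : ℝ) • hl'])

/-- Context: `g ≥ 1`, `Q` a symmetric positive definite bilinear form on `ℝ^g`,
`Λ` the full-rank lattice spanned over `ℤ` by an `ℝ`-basis `b` of `ℝ^g`,
and `Θ` the tropical theta function `Θ x = sup_{λ ∈ Λ} (Q λ x - Q λ λ / 2)`. -/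
theorem tropical_theta_two_torsion_in_corner_locus (g : ℕ) (hg : 1 ≤ g)
    (Q : (Fin g → ℝ) →ₗ[ℝ] (Fin g → ℝ) →ₗ[ℝ] ℝ)
    (hQsymm : ∀ x y, Q x y = Q y x)
    (hQpos : ∀ x : Fin g → ℝ, x ≠ 0 → 0 < Q x x)
    (b : Module.Basis (Fin g) ℝ (Fin g → ℝ))
    (Λ : Set (Fin g → ℝ))
    (hΛ : Λ = ((Submodule.span ℤ (Set.range ⇑b) : Submodule ℤ (Fin g → ℝ)) : Set (Fin g → ℝ)))
    (Θ : (Fin g → ℝ) → ℝ)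
    (hΘ : ∀ x, Θ x = sSup ((fun l => Q l x - Q l l / 2) '' Λ))
    (x : Fin g → ℝ) (hx : (2 : ℝ) • x ∈ Λ) (hx' : x ∉ Λ) :
    ¬ DifferentiableAt ℝ Θ x :=
  tropical_theta_two_torsion_in_corner_locus_general g Q hQsymm hQpos b Λ hΛ Θ hΘ x hx hx'
end
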